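/- arXiv:2505.14086 — 5 statements merged into one kernel-verified Lean document; each statement's English description precedes it below -/
import Mathlib

section
/- For all real ω, the Fourier transform of the hyperbolic secant satisfies ∫_{-∞}^{∞} sech(x) e^{-iωx} dx = π sech(πω/2). -/
/-!
The substitution `x = (1 + tanh t) / 2`, under which `x = eᵗ / (2 cosh t)`,
`1 - x = e⁻ᵗ / (2 cosh t)` and `dx = dt / (2 cosh² t)`, turns `∫ e^{zt} / cosh t dt` into the
Beta integral `B(s, 1 - s)` with `s = (1 + z) / 2`. That equals `Γ(s) Γ(1 - s) = π / sin (π s)`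
by Euler's reflection formula, i.e. `π / cos (π z / 2)`; at `z = -iω` this is `π / cosh (π ω / 2)`.
-/

open Real MeasureTheory Set

noncomputable def oneAddTanhDivTwo (t : ℝ) : ℝ := (1 + tanh t) / 2

lemma oneAddTanhDivTwo_eq (t : ℝ) : oneAddTanhDivTwo t = exp t / (2 * cosh t) := by
  rw [oneAddTanhDivTwo, tanh_eq_sinh_div_cosh, ← cosh_add_sinh]
  field_simp [(cosh_pos t).ne']

lemma one_sub_oneAddTanhDivTwo (t : ℝ) : 1 - oneAddTanhDivTwo t = exp (-t) / (2 * cosh t) := by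
  rw [oneAddTanhDivTwo, tanh_eq_sinh_div_cosh, ← cosh_sub_sinh]
  field_simp [(cosh_pos t).ne']
  ring

lemma hasDerivAt_oneAddTanhDivTwo (t : ℝ) :
    HasDerivAt oneAddTanhDivTwo (1 / (2 * cosh t ^ 2)) t := by
  have hquot := (hasDerivAt_exp t).div ((hasDerivAt_cosh t).const_mul 2)
    (mul_pos two_pos (cosh_pos t)).ne'
  have hexp : exp t * (cosh t - sinh t) = 1 := by rw [cosh_sub_sinh, ← exp_add]; simp
  rw [show oneAddTanhDivTwo = exp / fun y ↦ 2 * cosh y from funext oneAddTanhDivTwo_eq]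
  refine hquot.congr_deriv ?_
  field_simp [(cosh_pos t).ne']
  linear_combination hexp

lemma image_oneAddTanhDivTwo : oneAddTanhDivTwo '' univ = Ioo 0 1 := by
  have : oneAddTanhDivTwo = (2⁻¹ * · + 2⁻¹) ∘ tanh := by
    ext t; simp only [oneAddTanhDivTwo, Function.comp]; ring
  rw [this, image_comp, tanh_bijOn.image_eq, image_affine_Ioo (by norm_num)]
  norm_num

lemma injective_oneAddTanhDivTwo : Function.Injective oneAddTanhDivTwo := fun a b h ↦
  tanh_injective (by simpa [oneAddTanhDivTwo] using h)

theorem integral_Ioo_zero_one_eq_integral_oneAddTanhDivTwo {E : Type*} [NormedAddCommGroup E]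
    [NormedSpace ℝ E] (g : ℝ → E) :
    ∫ x in Ioo 0 1, g x = ∫ t, (1 / (2 * cosh t ^ 2)) • g (oneAddTanhDivTwo t) := by
  have := integral_image_eq_integral_abs_deriv_smul MeasurableSet.univ
    (fun t _ ↦ (hasDerivAt_oneAddTanhDivTwo t).hasDerivWithinAt)
    injective_oneAddTanhDivTwo.injOn g
  rw [image_oneAddTanhDivTwo, Measure.restrict_univ] at this
  rw [this]
  congr 1 with t
  rw [abs_of_pos (by positivity)]

lemma ofReal_cpow_def_of_pos {a : ℝ} (ha : 0 < a) (w : ℂ) :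
    (a : ℂ) ^ w = Complex.exp (Real.log a * w) := by
  rw [Complex.cpow_def_of_ne_zero (by exact_mod_cast ha.ne'), Complex.ofReal_log ha.le]

lemma smul_cpow_oneAddTanhDivTwo (s : ℂ) (t : ℝ) :
    (1 / (2 * cosh t ^ 2)) •
        ((oneAddTanhDivTwo t : ℂ) ^ (s - 1) * (1 - (oneAddTanhDivTwo t : ℂ)) ^ (1 - s - 1)) =
      Complex.exp ((2 * s - 1) * t) / cosh t := by
  have hc : 0 < 2 * cosh t := mul_pos two_pos (cosh_pos t)
  set L := Real.log (2 * cosh t)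
  have hlog_pos : Real.log (oneAddTanhDivTwo t) = t - L := by
    rw [oneAddTanhDivTwo_eq, Real.log_div (exp_pos t).ne' hc.ne', log_exp]
  have hlog_neg : Real.log (1 - oneAddTanhDivTwo t) = -t - L := by
    rw [one_sub_oneAddTanhDivTwo, Real.log_div (exp_pos _).ne' hc.ne', log_exp]
  have hpos : 0 < oneAddTanhDivTwo t := by rw [oneAddTanhDivTwo_eq]; positivity
  have hpos_sub : 0 < 1 - oneAddTanhDivTwo t := by rw [one_sub_oneAddTanhDivTwo]; positivity
  rw [show (1 : ℂ) - oneAddTanhDivTwo t = ((1 - oneAddTanhDivTwo t : ℝ) : ℂ) by push_cast; rfl,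
    ofReal_cpow_def_of_pos hpos, ofReal_cpow_def_of_pos hpos_sub, ← Complex.exp_add, hlog_pos, hlog_neg,
    show ((t - L : ℝ) : ℂ) * (s - 1) + ((-t - L : ℝ) : ℂ) * (1 - s - 1) = (2 * s - 1) * t + L by
      push_cast; ring,
    Complex.exp_add, ← Complex.ofReal_exp, exp_log hc, Complex.real_smul]
  push_cast
  field_simp [(cosh_pos t).ne']

theorem betaIntegral_one_sub {s : ℂ} (h₀ : 0 < s.re) (h₁ : s.re < 1) :
    Complex.betaIntegral s (1 - s) = π / Complex.sin (π * s) := by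
  have := Complex.Gamma_mul_Gamma_eq_betaIntegral h₀ (show 0 < (1 - s).re by simpa using h₁)
  rw [add_sub_cancel, Complex.Gamma_one, one_mul] at this
  rw [← this, Complex.Gamma_mul_Gamma_one_sub]

theorem integral_cexp_mul_div_cosh {z : ℂ} (hz : |z.re| < 1) :
    ∫ t : ℝ, Complex.exp (z * t) / cosh t = π / Complex.cos (π * z / 2) := by
  set s := (1 + z) / 2
  have h2s : 2 * s - 1 = z := by ring
  obtain ⟨hz₀, hz₁⟩ := abs_lt.mp hz
  calc ∫ t : ℝ, Complex.exp (z * t) / cosh t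
      = ∫ t : ℝ, (1 / (2 * cosh t ^ 2)) • ((oneAddTanhDivTwo t : ℂ) ^ (s - 1) *
          (1 - (oneAddTanhDivTwo t : ℂ)) ^ (1 - s - 1)) := by
        simp_rw [smul_cpow_oneAddTanhDivTwo, h2s]
    _ = ∫ x in Ioo (0 : ℝ) 1, (x : ℂ) ^ (s - 1) * (1 - (x : ℂ)) ^ (1 - s - 1) :=
        (integral_Ioo_zero_one_eq_integral_oneAddTanhDivTwo
          fun x : ℝ ↦ (x : ℂ) ^ (s - 1) * (1 - (x : ℂ)) ^ (1 - s - 1)).symm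
    _ = Complex.betaIntegral s (1 - s) := by
        rw [Complex.betaIntegral, intervalIntegral.integral_of_le zero_le_one,
          integral_Ioc_eq_integral_Ioo]
    _ = π / Complex.sin (π * s) :=
        betaIntegral_one_sub (by simp [s]; linarith) (by simp [s]; linarith)
    _ = π / Complex.cos (π * z / 2) := by
        rw [show (π : ℂ) * s = π * z / 2 + π / 2 by ring, Complex.sin_add_pi_div_two]

theorem fourier_sech (ω : ℝ) :
    ∫ x : ℝ, (1 / Real.cosh x : ℂ) * Complex.exp (-(Complex.I * ω * x)) =
      (π : ℂ) * (1 / Real.cosh (π * ω / 2)) := by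
  have hcos : Complex.cos (π * -(Complex.I * ω) / 2) = Real.cosh (π * ω / 2) := by
    rw [show (π : ℂ) * -(Complex.I * ω) / 2 = -((π * ω / 2 : ℝ) * Complex.I) by push_cast; ring,
      Complex.cos_neg, Complex.cos_mul_I, Complex.ofReal_cosh]
  rw [mul_one_div, ← hcos, ← integral_cexp_mul_div_cosh (z := -(Complex.I * ω)) (by simp)]
  congr 1 with x
  rw [neg_mul]
  ring
end

section
/- For all real ω ≠ 0, the Fourier transform of sech² satisfies ∫_{-∞}^{∞} sech²(x) e^{-iωx} dx = πω·csch(πω/2), and the formula extends continuously to ω = 0 with value 2 (since πω·csch(πω/2) → 2 as ω → 0). -/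
/-!
Substituting `u = sigmoid (2x)`, for which `sech² x dx = 2 du` and
`e^{2zx} = u^z (1 - u)^(-z)`, turns `∫ sech² x e^{2zx} dx` into twice the Beta integral
`B(1 + z, 1 - z) = Γ(1 + z) Γ(1 - z)`, which Euler's reflection formula evaluates as
`π z / sin (π z)`. At `z = -iω/2` the result `2π z / sin (π z)` is `πω / sinh (πω/2)`.
-/

open Real MeasureTheory Filter

lemma Real.sigmoid_mul_one_sub_sigmoid (x : ℝ) :
    sigmoid x * (1 - sigmoid x) = (1 / cosh (x / 2)) ^ 2 / 4 := by
  have hx : exp x = exp (x / 2) ^ 2 := by rw [← exp_nat_mul]; ring_nf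
  rw [sigmoid_def, cosh_eq, exp_neg, exp_neg, hx]
  field_simp
  ring

lemma Real.sigmoid_cpow_mul_one_sub_sigmoid_cpow_neg (z : ℂ) (x : ℝ) :
    (sigmoid x : ℂ) ^ z * (1 - (sigmoid x : ℂ)) ^ (-z) = Complex.exp (z * x) := by
  have hσ : (sigmoid x : ℂ) ≠ 0 := Complex.ofReal_ne_zero.mpr (sigmoid_pos x).ne'
  have h1 : 1 - (sigmoid x : ℂ) = (sigmoid x : ℂ) * (exp (-x) : ℝ) := by
    rw [← Complex.ofReal_mul, sigmoid_mul_rexp_neg, sigmoid_neg]; push_cast; ring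
  rw [h1, Complex.mul_cpow_ofReal_nonneg (sigmoid_nonneg x) (exp_pos _).le, ← mul_assoc,
    ← Complex.cpow_add _ _ hσ, add_neg_cancel, Complex.cpow_zero, one_mul,
    Complex.cpow_def_of_ne_zero (Complex.ofReal_ne_zero.mpr (exp_pos _).ne'),
    ← Complex.ofReal_log (exp_pos _).le, log_exp]
  push_cast
  ring_nf

theorem integral_Ioo_zero_one_eq_integral_sigmoid {E : Type*} [NormedAddCommGroup E]
    [NormedSpace ℝ E] (g : ℝ → E) :
    ∫ u in Set.Ioo 0 1, g u = ∫ x, (sigmoid x * (1 - sigmoid x)) • g (sigmoid x) := by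
  have h := integral_image_eq_integral_abs_deriv_smul MeasurableSet.univ
    (fun x _ => (hasDerivAt_sigmoid x).hasDerivWithinAt) sigmoid_injective.injOn g
  rw [Set.image_univ, range_sigmoid, setIntegral_univ] at h
  rw [h]
  congr with x
  rw [abs_of_pos (mul_pos (sigmoid_pos x) (sub_pos.mpr (sigmoid_lt_one x)))]

theorem integral_Ioo_cpow_mul_one_sub_cpow_neg {z : ℂ} (hz : |z.re| < 1) :
    ∫ u in Set.Ioo (0 : ℝ) 1, (u : ℂ) ^ z * (1 - (u : ℂ)) ^ (-z) =
      Complex.Gamma (1 + z) * Complex.Gamma (1 - z) := by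
  have h := Complex.Gamma_mul_Gamma_eq_betaIntegral (s := 1 + z) (t := 1 - z)
    (by simp; linarith [neg_abs_le z.re]) (by simp; linarith [le_abs_self z.re])
  rw [show 1 + z + (1 - z) = 2 by ring, Complex.Gamma_ofNat_eq_factorial, Nat.factorial_one,
    Nat.cast_one, one_mul] at h
  rw [h, Complex.betaIntegral, intervalIntegral.integral_of_le zero_le_one,
    integral_Ioc_eq_integral_Ioo]
  congr with u
  ring_nf

theorem Complex.Gamma_one_add_mul_Gamma_one_sub {z : ℂ} (hz : z ≠ 0) :
    Gamma (1 + z) * Gamma (1 - z) = π * z / sin (π * z) := by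
  rw [add_comm, Gamma_add_one z hz, mul_assoc, Gamma_mul_Gamma_one_sub]
  ring

theorem integral_sq_one_div_cosh_mul_cexp {z : ℂ} (hz : |z.re| < 1) :
    ∫ x : ℝ, ((1 / cosh x : ℝ) ^ 2 : ℂ) * Complex.exp (2 * z * x) =
      2 * (Complex.Gamma (1 + z) * Complex.Gamma (1 - z)) := by
  set g : ℝ → ℂ := fun t => (sigmoid t * (1 - sigmoid t)) •
    ((sigmoid t : ℂ) ^ z * (1 - (sigmoid t : ℂ)) ^ (-z))
  calc ∫ x : ℝ, ((1 / cosh x : ℝ) ^ 2 : ℂ) * Complex.exp (2 * z * x)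
      = ∫ x : ℝ, (4 : ℝ) • g (2 * x) := by
        congr with x
        simp only [g, sigmoid_cpow_mul_one_sub_sigmoid_cpow_neg, sigmoid_mul_one_sub_sigmoid,
          Complex.real_smul]
        push_cast
        ring_nf
    _ = 2 * ∫ u in Set.Ioo (0 : ℝ) 1, (u : ℂ) ^ z * (1 - (u : ℂ)) ^ (-z) := by
        rw [integral_smul, Measure.integral_comp_mul_left g, smul_smul,
          integral_Ioo_zero_one_eq_integral_sigmoid]
        norm_num [g]
    _ = 2 * (Complex.Gamma (1 + z) * Complex.Gamma (1 - z)) := by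
        rw [integral_Ioo_cpow_mul_one_sub_cpow_neg hz]

theorem tendsto_sinh_mul_div_self (a : ℝ) :
    Tendsto (fun t => sinh (a * t) / t) (nhdsWithin 0 {0}ᶜ) (nhds a) := by
  have h := ((hasDerivAt_id (0 : ℝ)).const_mul a).sinh.tendsto_slope
  simp only [mul_zero, cosh_zero, mul_one, one_mul, id] at h
  refine h.congr fun t => ?_
  simp [slope_def_field]

theorem fourier_sech_sq (ω : ℝ) (hω : ω ≠ 0) :
    (∫ x : ℝ, ((1 / Real.cosh x : ℝ) ^ 2 : ℂ) * Complex.exp (-(Complex.I * ω * x)) =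
      (π : ℂ) * ω * (1 / Real.sinh (π * ω / 2))) ∧
    Tendsto (fun t : ℝ => π * t * (1 / Real.sinh (π * t / 2))) (nhdsWithin 0 {0}ᶜ)
      (nhds 2) := by
  constructor
  · have hsinh : (sinh (π * ω / 2) : ℂ) ≠ 0 := by
      exact_mod_cast sinh_ne_zero.mpr (by positivity)
    have hsin : Complex.sin (π * -(Complex.I * ω / 2)) = -(sinh (π * ω / 2) * Complex.I) := by
      rw [show (π : ℂ) * -(Complex.I * ω / 2) = -((π * ω / 2 : ℝ) * Complex.I) by
          push_cast; ring,
        Complex.sin_neg, Complex.sin_mul_I, Complex.ofReal_sinh]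
    calc _ = ∫ x : ℝ, ((1 / cosh x : ℝ) ^ 2 : ℂ) *
            Complex.exp (2 * -(Complex.I * ω / 2) * x) := by
          congr with x
          ring_nf
      _ = _ := by
          rw [integral_sq_one_div_cosh_mul_cexp (by simp),
            Complex.Gamma_one_add_mul_Gamma_one_sub (by simp [hω]), hsin]
          field_simp
  · have h := (tendsto_sinh_mul_div_self (π / 2)).inv₀ (by positivity) |>.const_mul π
    convert h using 2 with t
    · field_simp
    · field_simp
end

section
/- For all real ω ≠ 0, the convolution identity (1/(2π)) ∫_{-∞}^{∞} π sech(πt/2) · π sech(π(ω−t)/2) dt = πω csch(πω/2) holds. -/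
/-!
With `c = π ω / 2`, the substitution `x = π t / 2` reduces the claim to
`∫ sech x * sech (x - c) dx = 2 c / sinh c`. Since `sinh c = sinh (x - (x - c))`, the integrand
`sinh c * sech x * sech (x - c)` is the derivative of `log (cosh x) - log (cosh (x - c))`, and this
tends to `± c` at `± ∞` because `log (cosh x) - |x| → -log 2`.
-/

open Real MeasureTheory Filter Topology Asymptotics

namespace Real

lemma inv_cosh_le_two_mul_exp_neg (x : ℝ) : (cosh x)⁻¹ ≤ 2 * exp (-x) := by
  rw [inv_le_iff_one_le_mul₀ (cosh_pos x), cosh_eq]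
  have : exp (-x) * exp x = 1 := by rw [← exp_add, neg_add_cancel, exp_zero]
  nlinarith [exp_pos (-x)]

lemma integrable_inv_cosh : Integrable fun x : ℝ => (cosh x)⁻¹ := by
  refine (continuous_cosh.inv₀ fun x => (cosh_pos x).ne').locallyIntegrable
    |>.integrable_of_isBigO_atTop_of_norm_isNegInvariant (g := fun x => exp (-x)) ?_ ?_
      ⟨Set.Ioi 0, Ioi_mem_atTop 0, by simpa using exp_neg_integrableOn_Ioi 0 one_pos⟩
  · exact Eventually.of_forall fun x => by simp [Function.comp, cosh_neg]
  · refine IsBigO.of_bound 2 (Eventually.of_forall fun x => ?_)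
    simpa [abs_of_pos (cosh_pos x)] using inv_cosh_le_two_mul_exp_neg x

lemma integrable_inv_cosh_mul_inv_cosh_sub (c : ℝ) :
    Integrable fun x : ℝ => (cosh x)⁻¹ * (cosh (x - c))⁻¹ := by
  refine integrable_inv_cosh.mono' (by fun_prop) (Eventually.of_forall fun x => ?_)
  rw [norm_of_nonneg (by positivity)]
  exact mul_le_of_le_one_right (by positivity) (inv_le_one_of_one_le₀ (one_le_cosh _))

lemma log_cosh_sub_self (x : ℝ) : log (cosh x) - x = log ((1 + exp (-2 * x)) / 2) := by
  rw [sub_eq_iff_eq_add, ← log_exp x, ← log_mul (by positivity) (exp_pos x).ne', log_exp,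
    cosh_eq]
  congr 1
  rw [div_mul_eq_mul_div, add_mul, ← exp_add, one_mul]
  ring_nf

lemma tendsto_log_cosh_sub_self_atTop :
    Tendsto (fun x => log (cosh x) - x) atTop (𝓝 (-log 2)) := by
  have hexp : Tendsto (fun x : ℝ => exp (-2 * x)) atTop (𝓝 0) :=
    tendsto_exp_atBot.comp (tendsto_id.const_mul_atTop_of_neg (by norm_num))
  have := ((hexp.const_add 1).div_const 2).log (by norm_num)
  simpa [log_cosh_sub_self, log_inv] using this

lemma hasDerivAt_log_cosh_sub_log_cosh_sub (c x : ℝ) :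
    HasDerivAt (fun x => log (cosh x) - log (cosh (x - c)))
      (sinh c * ((cosh x)⁻¹ * (cosh (x - c))⁻¹)) x := by
  have hshift : HasDerivAt (fun x => cosh (x - c)) (sinh (x - c)) x := by
    simpa using (hasDerivAt_cosh (x - c)).comp_sub_const x c
  refine (((hasDerivAt_cosh x).log (cosh_pos x).ne').sub
    (hshift.log (cosh_pos _).ne')).congr_deriv ?_
  have hsub : sinh x * cosh (x - c) - cosh x * sinh (x - c) = sinh c := by
    rw [← sinh_sub, sub_sub_cancel]
  field_simp [(cosh_pos x).ne', (cosh_pos (x - c)).ne']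
  linear_combination hsub

lemma tendsto_log_cosh_sub_log_cosh_sub_atTop (c : ℝ) :
    Tendsto (fun x => log (cosh x) - log (cosh (x - c))) atTop (𝓝 c) := by
  have h := (tendsto_log_cosh_sub_self_atTop.sub (tendsto_log_cosh_sub_self_atTop.comp
    (tendsto_atTop_add_const_right _ (-c) tendsto_id))).add_const c
  rw [sub_self, zero_add] at h
  refine h.congr fun x => ?_
  simp only [Function.comp, id, ← sub_eq_add_neg]
  ring

lemma tendsto_log_cosh_sub_log_cosh_sub_atBot (c : ℝ) :
    Tendsto (fun x => log (cosh x) - log (cosh (x - c))) atBot (𝓝 (-c)) := by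
  have h := (tendsto_log_cosh_sub_log_cosh_sub_atTop c).neg.comp
    (tendsto_atTop_add_const_left _ c tendsto_neg_atBot_atTop)
  convert h using 2 with x
  simp only [Function.comp]
  rw [← cosh_neg x, ← cosh_neg (x - c)]
  ring_nf

lemma integral_inv_cosh_mul_inv_cosh_sub {c : ℝ} (hc : c ≠ 0) :
    ∫ x, (cosh x)⁻¹ * (cosh (x - c))⁻¹ = 2 * c / sinh c := by
  have h := integral_of_hasDerivAt_of_tendsto (hasDerivAt_log_cosh_sub_log_cosh_sub c)
    ((integrable_inv_cosh_mul_inv_cosh_sub c).const_mul _)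
    (tendsto_log_cosh_sub_log_cosh_sub_atBot c) (tendsto_log_cosh_sub_log_cosh_sub_atTop c)
  rw [integral_const_mul] at h
  rw [eq_div_iff (sinh_ne_zero.mpr hc), mul_comm, h]
  ring

end Real

theorem sech_convolution (ω : ℝ) (hω : ω ≠ 0) :
    (1 / (2 * π)) * ∫ t : ℝ,
        (π * (1 / Real.cosh (π * t / 2))) * (π * (1 / Real.cosh (π * (ω - t) / 2))) =
      π * ω * (1 / Real.sinh (π * ω / 2)) := by
  have hc : π * ω / 2 ≠ 0 := by simp [pi_ne_zero, hω]
  have hintegrand : ∀ t : ℝ,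
      (π * (1 / cosh (π * t / 2))) * (π * (1 / cosh (π * (ω - t) / 2))) =
        π ^ 2 * ((cosh (π / 2 * t))⁻¹ * (cosh (π / 2 * t - π * ω / 2))⁻¹) := by
    intro t
    rw [← cosh_neg (π * (ω - t) / 2)]
    ring_nf
  simp_rw [hintegrand]
  rw [integral_const_mul, Measure.integral_comp_mul_left
    (fun x => (cosh x)⁻¹ * (cosh (x - π * ω / 2))⁻¹), integral_inv_cosh_mul_inv_cosh_sub hc,
    abs_of_pos (by positivity), smul_eq_mul]
  field_simp
end

section
/- For every positive real s, every real μ > 0, and every positive real a, ∫_0^∞ r^{μ−1} e^{−ar} sin(sr) dr = Γ(μ)/(a² + s²)^{μ/2} · sin(μ·arctan(s/a)). -/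
/-!
For real `b > 0` the substitution `t ↦ t / b` gives `∫₀^∞ t^(μ-1) e^(-bt) dt = Γ(μ) b^(-μ)`.
The left side is the complex moment generating function of `t ↦ -t` under the measure
`t^(μ-1) dt` on `(0, ∞)`, hence holomorphic in `b` on the half-plane `0 < re b`, as is the
right side; by the identity theorem the formula holds on the whole half-plane. With
`b = a - i s` the integral in question is the imaginary part of `Γ(μ) b^(-μ)`, and `b` has
modulus `√(a² + s²)` and argument `-arctan (s / a)`.
-/

open Real MeasureTheory Set Filter Topology ProbabilityTheory
open scoped Complex

noncomputable def rpowMeasure (a : ℝ) : Measure ℝ :=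
  (volume.restrict (Ioi 0)).withDensity fun t ↦ ENNReal.ofReal (t ^ (a - 1))

section rpowMeasure

variable {E : Type*} [NormedAddCommGroup E] [NormedSpace ℝ E]

lemma integrable_rpowMeasure_iff (a : ℝ) (g : ℝ → E) :
    Integrable g (rpowMeasure a) ↔ IntegrableOn (fun t ↦ t ^ (a - 1) • g t) (Ioi 0) := by
  rw [rpowMeasure, integrable_withDensity_iff_integrable_smul' (by fun_prop)
    (ae_of_all _ fun _ ↦ ENNReal.ofReal_lt_top)]
  exact integrableOn_congr_fun (fun t ht ↦ by
    rw [ENNReal.toReal_ofReal (rpow_nonneg (le_of_lt ht) _)]) measurableSet_Ioi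

lemma integral_rpowMeasure (a : ℝ) (g : ℝ → E) :
    ∫ t, g t ∂rpowMeasure a = ∫ t in Ioi 0, t ^ (a - 1) • g t := by
  rw [rpowMeasure, integral_withDensity_eq_integral_toReal_smul (by fun_prop)
    (ae_of_all _ fun _ ↦ ENNReal.ofReal_lt_top)]
  exact setIntegral_congr_fun measurableSet_Ioi fun t ht ↦ by
    rw [ENNReal.toReal_ofReal (rpow_nonneg (le_of_lt ht) _)]

end rpowMeasure

lemma Ioi_subset_integrableExpSet_rpowMeasure {a : ℝ} (ha : 0 < a) :
    Ioi 0 ⊆ integrableExpSet (fun t ↦ -t) (rpowMeasure a) := by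
  intro u hu
  rw [integrableExpSet, Set.mem_ofPred, integrable_rpowMeasure_iff]
  refine (integrableOn_rpow_mul_exp_neg_mul_rpow (s := a - 1) (by linarith) one_pos hu).congr_fun
    (fun t _ ↦ ?_) measurableSet_Ioi
  simp only [rpow_one, smul_eq_mul, neg_mul, mul_neg]

lemma complexMGF_neg_rpowMeasure (a : ℝ) (z : ℂ) :
    complexMGF (fun t ↦ -t) (rpowMeasure a) z =
      ∫ t in Ioi 0, (t ^ (a - 1) : ℝ) * cexp (-(z * t)) := by
  simp only [complexMGF, integral_rpowMeasure, Complex.real_smul, Complex.ofReal_neg, mul_neg]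

lemma integrableOn_rpow_mul_cexp_neg_mul {a : ℝ} (ha : 0 < a) {b : ℂ} (hb : 0 < b.re) :
    IntegrableOn (fun t : ℝ ↦ (t ^ (a - 1) : ℝ) * cexp (-(b * t))) (Ioi 0) := by
  have h := integrable_cexp_mul_of_re_mem_integrableExpSet (z := b) (by fun_prop)
    (Ioi_subset_integrableExpSet_rpowMeasure ha hb)
  simpa only [integrable_rpowMeasure_iff, Complex.real_smul, Complex.ofReal_neg, mul_neg] using h

lemma analyticOnNhd_integral_rpow_mul_cexp_neg_mul {a : ℝ} (ha : 0 < a) :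
    AnalyticOnNhd ℂ (fun z : ℂ ↦ ∫ t in Ioi 0, (t ^ (a - 1) : ℝ) * cexp (-(z * t)))
      {z | 0 < z.re} := by
  have h := analyticOnNhd_complexMGF (X := fun t ↦ -t) (μ := rpowMeasure a)
  simp only [funext (complexMGF_neg_rpowMeasure a)] at h
  exact h.mono fun z hz ↦
    interior_maximal (Ioi_subset_integrableExpSet_rpowMeasure ha) isOpen_Ioi hz

lemma integral_rpow_mul_cexp_neg_mul_ofReal {a : ℝ} (ha : 0 < a) {x : ℝ} (hx : 0 < x) :
    ∫ t in Ioi 0, (t ^ (a - 1) : ℝ) * cexp (-(x * t)) =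
      Complex.Gamma a * (x : ℂ) ^ (-(a : ℂ)) := by
  have h := Real.integral_rpow_mul_exp_neg_mul_Ioi ha hx
  rw [one_div, inv_rpow hx.le, ← rpow_neg hx.le] at h
  rw [Complex.Gamma_ofReal, ← Complex.ofReal_neg, ← Complex.ofReal_cpow hx.le,
    ← Complex.ofReal_mul, mul_comm, ← h, ← integral_complex_ofReal]
  simp only [Complex.ofReal_mul, Complex.ofReal_exp, Complex.ofReal_neg]

lemma Complex.tendsto_ofReal_nhdsNE (x : ℝ) : Tendsto ((↑) : ℝ → ℂ) (𝓝[≠] x) (𝓝[≠] (x : ℂ)) :=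
  Complex.continuous_ofReal.continuousWithinAt.tendsto_nhdsWithin fun _ hy ↦
    Complex.ofReal_injective.ne hy

theorem integral_rpow_mul_cexp_neg_mul {a : ℝ} (ha : 0 < a) {b : ℂ} (hb : 0 < b.re) :
    ∫ t in Ioi 0, (t ^ (a - 1) : ℝ) * cexp (-(b * t)) =
      Complex.Gamma a * b ^ (-(a : ℂ)) := by
  have h_rhs :
      AnalyticOnNhd ℂ (fun z : ℂ ↦ Complex.Gamma a * z ^ (-(a : ℂ))) {z | 0 < z.re} :=
    fun z hz ↦ analyticAt_const.mul (analyticAt_id.cpow analyticAt_const (Or.inl hz))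
  have h_real : ∃ᶠ x : ℝ in 𝓝[≠] 1, ∫ t in Ioi 0, (t ^ (a - 1) : ℝ) * cexp (-(x * t)) =
      Complex.Gamma a * (x : ℂ) ^ (-(a : ℂ)) :=
    ((lt_mem_nhds one_pos).filter_mono nhdsWithin_le_nhds).mono
      (fun x hx ↦ integral_rpow_mul_cexp_neg_mul_ofReal ha hx) |>.frequently
  exact (analyticOnNhd_integral_rpow_mul_cexp_neg_mul ha).eqOn_of_preconnected_of_frequently_eq
    h_rhs (convex_halfSpace_re_gt 0).isPreconnected (z₀ := ((1 : ℝ) : ℂ)) (by simp)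
    ((Complex.tendsto_ofReal_nhdsNE 1).frequently h_real) hb

lemma Complex.arg_eq_arctan {z : ℂ} (hz : 0 < z.re) : arg z = Real.arctan (z.im / z.re) := by
  have h := abs_lt.1 (Complex.abs_arg_lt_pi_div_two_iff.2 (Or.inl hz))
  rw [← Complex.tan_arg, Real.arctan_tan h.1 h.2]

lemma Complex.im_cpow_neg_ofReal {z : ℂ} (hz : 0 < z.re) (p : ℝ) :
    (z ^ (-(p : ℂ))).im =
      -Real.sin (p * Real.arctan (z.im / z.re)) / (z.re ^ 2 + z.im ^ 2) ^ (p / 2) := by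
  have h_pos : 0 < z.re ^ 2 + z.im ^ 2 := by positivity
  have h_norm : ‖z‖ = (z.re ^ 2 + z.im ^ 2) ^ (1 / 2 : ℝ) := by
    rw [Complex.norm_def, Complex.normSq_apply, sqrt_eq_rpow]
    ring_nf
  rw [← Complex.ofReal_neg, Complex.cpow_ofReal_im, Complex.arg_eq_arctan hz, h_norm,
    ← rpow_mul h_pos.le, show 1 / 2 * -p = -(p / 2) by ring, rpow_neg h_pos.le, mul_neg,
    Real.sin_neg, mul_comm (Real.arctan _)]
  ring

theorem integral_rpow_exp_sin_general (s : ℝ) (μ : ℝ) (hμ : 0 < μ)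
    (a : ℝ) (ha : 0 < a) :
    ∫ r in Set.Ioi (0 : ℝ), r ^ (μ - 1) * Real.exp (-(a * r)) * Real.sin (s * r) =
      Real.Gamma μ / (a ^ 2 + s ^ 2) ^ (μ / 2) * Real.sin (μ * Real.arctan (s / a)) := by
  set b : ℂ := ⟨a, -s⟩
  have hb : 0 < b.re := ha
  calc ∫ r in Ioi 0, r ^ (μ - 1) * rexp (-(a * r)) * Real.sin (s * r)
      = ∫ r in Ioi 0, ((r ^ (μ - 1) : ℝ) * cexp (-(b * r))).im := by
        congr 1; funext r
        simp [Complex.exp_im, b, mul_assoc]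
    _ = (Complex.Gamma μ * b ^ (-(μ : ℂ))).im := by
        rw [← integral_rpow_mul_cexp_neg_mul hμ hb]
        exact integral_im (integrableOn_rpow_mul_cexp_neg_mul hμ hb)
    _ = _ := by
        rw [Complex.Gamma_ofReal, Complex.im_ofReal_mul, Complex.im_cpow_neg_ofReal hb]
        simp only [b, neg_div, Real.arctan_neg, mul_neg, Real.sin_neg, neg_neg, neg_sq]
        ring

theorem integral_rpow_exp_sin (s : ℝ) (hs : 0 < s) (μ : ℝ) (hμ : 0 < μ)
    (a : ℝ) (ha : 0 < a) :
    ∫ r in Set.Ioi (0 : ℝ), r ^ (μ - 1) * Real.exp (-(a * r)) * Real.sin (s * r) =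
      Real.Gamma μ / (a ^ 2 + s ^ 2) ^ (μ / 2) * Real.sin (μ * Real.arctan (s / a)) :=
  integral_rpow_exp_sin_general s μ hμ a ha
end

section
/- For real α, β with α + β > 0 and α > 0, the function g(x) = ‖x‖^β tanh^α(‖x‖) on ℝⁿ satisfies: g(x) − ‖x‖^β is integrable on ℝⁿ, i.e., x ↦ ‖x‖^β(1 − tanh^α‖x‖) ∈ L¹(ℝⁿ), provided β > −n. -/
/-!
Since `0 ≤ tanh r < 1`, the elementary bound `1 - t ^ α ≤ max α 1 * (1 - t)` on `[0, 1]`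
(from `t ≤ t ^ α` when `α ≤ 1`, Bernoulli's inequality when `α ≥ 1`) together with
`1 - tanh r = 2 / (exp (2 r) + 1) ≤ 2 exp (-2 r)` dominates the integrand by a multiple of
`‖x‖ ^ β * exp (-2 ‖x‖)`. In polar coordinates the latter is integrable exactly when
`r ^ (n - 1 + β) * exp (-2 r)` is integrable on `(0, ∞)`, i.e. when `β > -n`.
-/

open Real MeasureTheory Set

namespace Real

@[fun_prop]
theorem continuous_tanh : Continuous tanh := by
  simp only [funext tanh_eq_sinh_div_cosh]
  exact continuous_sinh.div continuous_cosh fun x => (cosh_pos x).ne'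

theorem tanh_nonneg {x : ℝ} (hx : 0 ≤ x) : 0 ≤ tanh x := by
  rw [tanh_eq_sinh_div_cosh]
  exact div_nonneg (sinh_nonneg_iff.2 hx) (cosh_pos x).le

theorem one_sub_tanh_le_two_mul_exp (x : ℝ) : 1 - tanh x ≤ 2 * exp (-2 * x) := by
  have hpos : 0 < exp x + exp (-x) := by positivity
  have hexp : exp (-2 * x) * exp x = exp (-x) := by rw [← exp_add]; ring_nf
  rw [tanh_eq, one_sub_div hpos.ne', div_le_iff₀ hpos]
  nlinarith [exp_pos (-2 * x), exp_pos (-x)]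

theorem one_sub_rpow_le_max_mul_one_sub {t : ℝ} (α : ℝ) (ht₀ : 0 ≤ t) (ht₁ : t ≤ 1) :
    1 - t ^ α ≤ max α 1 * (1 - t) := by
  rcases le_total α 1 with hα | hα
  · have := self_le_rpow_of_le_one ht₀ ht₁ hα
    rw [max_eq_right hα]
    linarith
  · have bernoulli := one_add_mul_self_le_rpow_one_add (s := t - 1) (by linarith) hα
    rw [add_sub_cancel] at bernoulli
    rw [max_eq_left hα]
    linarith

theorem one_sub_tanh_rpow_le {x : ℝ} (α : ℝ) (hx : 0 ≤ x) :
    1 - tanh x ^ α ≤ 2 * max α 1 * exp (-2 * x) :=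
  calc 1 - tanh x ^ α ≤ max α 1 * (1 - tanh x) :=
        one_sub_rpow_le_max_mul_one_sub α (tanh_nonneg hx) (tanh_lt_one x).le
    _ ≤ max α 1 * (2 * exp (-2 * x)) :=
        mul_le_mul_of_nonneg_left (one_sub_tanh_le_two_mul_exp x) (le_max_of_le_right zero_le_one)
    _ = 2 * max α 1 * exp (-2 * x) := by ring

end Real

theorem integrable_norm_rpow_mul_exp_neg_mul_norm {E : Type*} [NormedAddCommGroup E]
    [NormedSpace ℝ E] [FiniteDimensional ℝ E] [Nontrivial E] [MeasurableSpace E] [BorelSpace E]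
    (μ : Measure E) [μ.IsAddHaarMeasure] {β b : ℝ}
    (hβ : -(Module.finrank ℝ E : ℝ) < β) (hb : 0 < b) :
    Integrable (fun x : E => ‖x‖ ^ β * exp (-b * ‖x‖)) μ := by
  have hdim : ((Module.finrank ℝ E - 1 : ℕ) : ℝ) = Module.finrank ℝ E - 1 := by
    rw [Nat.cast_sub Module.finrank_pos, Nat.cast_one]
  rw [integrable_fun_norm_addHaar μ (f := fun y => y ^ β * exp (-b * y))]
  have hradial := integrableOn_rpow_mul_exp_neg_mul_rpow
    (s := (Module.finrank ℝ E - 1 : ℕ) + β) (p := 1) (by rw [hdim]; linarith) one_pos hb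
  refine hradial.congr_fun (fun y (hy : 0 < y) => ?_) measurableSet_Ioi
  dsimp only
  rw [rpow_one, rpow_add hy, rpow_natCast, smul_eq_mul, mul_assoc]

theorem integrable_rpow_one_sub_tanh_rpow_general (n : ℕ) (hn : 1 ≤ n) (α β : ℝ)
    (hα : 0 < α) (hβ : -(n : ℝ) < β) :
    Integrable (fun x : EuclideanSpace ℝ (Fin n) =>
      ‖x‖ ^ β * (1 - Real.tanh ‖x‖ ^ α)) := by
  have : Nontrivial (EuclideanSpace ℝ (Fin n)) :=
    Module.nontrivial_of_finrank_pos (R := ℝ) (by rwa [finrank_euclideanSpace_fin])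
  have hmajorant := (integrable_norm_rpow_mul_exp_neg_mul_norm volume
    (by rwa [finrank_euclideanSpace_fin]) two_pos).const_mul (2 * max α 1)
  refine hmajorant.mono' (Measurable.aestronglyMeasurable (by fun_prop)) (.of_forall fun x => ?_)
  have hr := rpow_nonneg (norm_nonneg x) β
  have htanh : 0 ≤ 1 - tanh ‖x‖ ^ α :=
    sub_nonneg.2 (rpow_le_one (tanh_nonneg (norm_nonneg x)) (tanh_lt_one _).le hα.le)
  rw [norm_of_nonneg (mul_nonneg hr htanh)]
  calc ‖x‖ ^ β * (1 - tanh ‖x‖ ^ α) ≤ ‖x‖ ^ β * (2 * max α 1 * exp (-2 * ‖x‖)) :=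
        mul_le_mul_of_nonneg_left (one_sub_tanh_rpow_le α (norm_nonneg x)) hr
    _ = 2 * max α 1 * (‖x‖ ^ β * exp (-2 * ‖x‖)) := by ring

theorem integrable_rpow_one_sub_tanh_rpow (n : ℕ) (hn : 1 ≤ n) (α β : ℝ)
    (hα : 0 < α) (hαβ : 0 < α + β) (hβ : -(n : ℝ) < β) :
    Integrable (fun x : EuclideanSpace ℝ (Fin n) =>
      ‖x‖ ^ β * (1 - Real.tanh ‖x‖ ^ α)) :=
  integrable_rpow_one_sub_tanh_rpow_general n hn α β hα hβ
end
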